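/- Let Z, Z' be as above, with deg_Z(P_i) = (d_1,…,d_p), and suppose there exists a good set of minimal separators {F_1,…,F_p} of P_i of multiplicity m_i. Then the Hilbert functions satisfy H_{Z'}(t) = H_Z(t) − #{ j ∈ {1,…,p} : d_j ⪯ t } for all t ∈ ℕ², where ⪯ is the componentwise partial order on ℕ². -/

import Mathlib

/-!
Formalization of statements from "Separators of fat points in ℙⁿ×ℙᵐ"
(Guardo–Van Tuyl).  The bigraded coordinate ring `R = k[x₀,…,xₙ,y₀,…,y_m]` of
`ℙⁿ×ℙᵐ` is modelled as `MvPolynomial (Fin (n+1) ⊕ Fin (m+1)) k`, where the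
variable `X (Sum.inl i)` is `xᵢ` (degree `(1,0)`) and `X (Sum.inr j)` is `yⱼ`
(degree `(0,1)`); bihomogeneity is weighted homogeneity for the weight `biWeight`.
-/

open MvPolynomial

noncomputable section

/-- The ℕ²-graded coordinate ring `R` of `ℙⁿ×ℙᵐ`. -/
abbrev BiRing (k : Type) [Field k] (n m : ℕ) : Type :=
  MvPolynomial (Fin (n + 1) ⊕ Fin (m + 1)) k

/-- The weight function on the variables giving the ℕ²-grading:
`deg xᵢ = (1,0)` and `deg yⱼ = (0,1)`. -/
def biWeight (n m : ℕ) : Fin (n + 1) ⊕ Fin (m + 1) → ℕ × ℕ :=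
  Sum.elim (fun _ => (1, 0)) (fun _ => (0, 1))

variable {k : Type} [Field k] {n m : ℕ}

/-- `F` is bihomogeneous of degree `d ∈ ℕ²`. -/
def BihomOfDeg (F : BiRing k n m) (d : ℕ × ℕ) : Prop :=
  IsWeightedHomogeneous (biWeight n m) F d

/-- `I` is the defining (prime) ideal of a point of `ℙⁿ×ℙᵐ`: it is generated by
`n` linear forms of degree `(1,0)` and `m` linear forms of degree `(0,1)` which
are linearly independent (so that they cut out a single point of `ℙⁿ×ℙᵐ`). -/
def IsPointIdeal (I : Ideal (BiRing k n m)) : Prop :=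
  ∃ (L : Fin n → BiRing k n m) (L' : Fin m → BiRing k n m),
    (∀ a, BihomOfDeg (L a) (1, 0)) ∧ (∀ b, BihomOfDeg (L' b) (0, 1)) ∧
    LinearIndependent k (Sum.elim L L') ∧
    I = Ideal.span (Set.range L ∪ Set.range L')

/-- The defining ideal `I_Z = I_{P₁}^{m₁} ∩ ⋯ ∩ I_{P_s}^{m_s}` of the fat point
scheme `Z = m₁P₁ + ⋯ + m_sP_s`. -/
def fatIdeal {s : ℕ} (P : Fin s → Ideal (BiRing k n m)) (mult : Fin s → ℕ) :
    Ideal (BiRing k n m) :=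
  ⨅ j, P j ^ mult j

/-- `F` is a separator of the point `Pᵢ` of multiplicity `mᵢ`, where `IZ = I_Z`
and `IZ' = I_{Z'}`: a bihomogeneous form lying in `I_{Z'} \ I_Z`
(equivalently `F ∈ I_{Pᵢ}^{mᵢ-1} \ I_{Pᵢ}^{mᵢ}` and `F ∈ I_{Pⱼ}^{mⱼ}` for `j ≠ i`). -/
def IsSeparator (IZ IZ' : Ideal (BiRing k n m)) (F : BiRing k n m) : Prop :=
  (∃ d, BihomOfDeg F d) ∧ F ∈ IZ' ∧ F ∉ IZ

/-- `F₁,…,F_p` is a set of minimal separators of `Pᵢ` of multiplicity `mᵢ`: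
each `Fⱼ` is a (bihomogeneous) separator, their residue classes generate the
ideal `I_{Z'}/I_Z` of `R/I_Z` (equivalently `I_Z + (F₁,…,F_p) = I_{Z'}`), and no
fewer than `p` bihomogeneous forms have classes generating `I_{Z'}/I_Z`. -/
def IsMinSepSet (IZ IZ' : Ideal (BiRing k n m)) {p : ℕ}
    (F : Fin p → BiRing k n m) : Prop :=
  (∀ j, IsSeparator IZ IZ' (F j)) ∧
  IZ ⊔ Ideal.span (Set.range F) = IZ' ∧
  ∀ q : ℕ, q < p → ∀ G : Fin q → BiRing k n m,
    (∀ j, ∃ d, BihomOfDeg (G j) d) → IZ ⊔ Ideal.span (Set.range G) ≠ IZ'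

/-- A family `F₁,…,F_p` of forms with `deg Fⱼ = d j` is a *good* set (of minimal
separators) if for every `t ∈ ℕ²` the classes of `x₀^{t₁-dⱼ₁} y₀^{t₂-dⱼ₂} Fⱼ`
(over those `j` with `d j ⪯ t` componentwise) are linearly independent in
`(I_{Z'}/I_Z)_t`; i.e. any `k`-linear combination lying in `I_Z` has all its
coefficients equal to zero. -/
def IsGoodSepSet {p : ℕ} (IZ : Ideal (BiRing k n m)) (F : Fin p → BiRing k n m)
    (d : Fin p → ℕ × ℕ) : Prop :=
  ∀ t : ℕ × ℕ, ∀ c : Fin p → k,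
    (∑ j ∈ Finset.univ.filter (fun j => (d j).1 ≤ t.1 ∧ (d j).2 ≤ t.2),
        c j • (X (Sum.inl 0) ^ (t.1 - (d j).1) * X (Sum.inr 0) ^ (t.2 - (d j).2) * F j))
      ∈ IZ →
    ∀ j : Fin p, (d j).1 ≤ t.1 → (d j).2 ≤ t.2 → c j = 0

/-- The Hilbert function of `R/I` in bidegree `t`: the `k`-dimension of the image
in `R/I` of the space of bihomogeneous polynomials of degree `t`. -/
def hilbertFn (I : Ideal (BiRing k n m)) (t : ℕ × ℕ) : ℕ :=
  Module.finrank k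
    (Submodule.map (Ideal.Quotient.mkₐ k I).toLinearMap
      (weightedHomogeneousSubmodule k (biWeight n m) t))

/-!
In bidegree `t`, every element of `I_{Z'} = I_Z + (F₁,…,F_p)` is `a + ∑ gⱼ Fⱼ` with `a ∈ I_Z`;
taking its degree-`t` part only the components of `gⱼ` of degree `t - dⱼ` survive. Since `x₀`
and `y₀` are nonzerodivisors modulo `I_Z` while `I_{Pᵢ} · I_{Z'} ⊆ I_Z`, neither lies in `I_{Pᵢ}`,
so `(R/I_{Pᵢ})_e` is spanned by the class of `x₀^{e₁} y₀^{e₂}`; hence each `gⱼ Fⱼ` is a multiple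
of `x₀^{t₁-dⱼ₁} y₀^{t₂-dⱼ₂} Fⱼ` modulo `I_{Pᵢ} Fⱼ ⊆ I_Z`. So `(I_{Z'})_t` is `(I_Z)_t` plus the
span of these forms, which goodness makes independent modulo `I_Z`, and the dimension count
`H(t) = dim R_t - dim I_t` gives the claim.
-/

attribute [local instance] weightedGradedAlgebra

local notation "𝒜" => weightedHomogeneousSubmodule k (biWeight n m)

theorem finrank_sup_span_image_eq_add {K V ι : Type*} [DivisionRing K] [AddCommGroup V]
    [Module K V] {A : Submodule K V} [FiniteDimensional K A] {G : ι → V} {s : Finset ι}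
    (h : ∀ c : ι → K, ∑ i ∈ s, c i • G i ∈ A → ∀ i ∈ s, c i = 0) :
    Module.finrank K ↥(A ⊔ Submodule.span K (G '' s)) = Module.finrank K A + s.card := by
  have hli : LinearIndepOn K G s :=
    linearIndepOn_finset_iff.mpr fun c hc => h c (hc ▸ A.zero_mem)
  have hdisj : A ⊓ Submodule.span K (G '' s) = ⊥ := by
    refine eq_bot_iff.mpr fun x ⟨hxA, hxG⟩ => ?_
    obtain ⟨l, hl, rfl⟩ := (Finsupp.mem_span_image_iff_linearCombination K).mp hxG
    rw [Finsupp.linearCombination_apply_of_mem_supported K hl] at hxA ⊢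
    rw [Submodule.mem_bot, Finset.sum_eq_zero fun i hi => by rw [h l hxA i hi, zero_smul]]
  have hspan : Module.finrank K (Submodule.span K (G '' s)) = s.card := by
    rw [Set.image_eq_range, finrank_span_eq_card hli]
    simp
  have : FiniteDimensional K (Submodule.span K (G '' s)) :=
    FiniteDimensional.span_of_finite K (s.finite_toSet.image G)
  have := Submodule.finrank_sup_add_finrank_inf_eq A (Submodule.span K (G '' s))
  rw [hdisj, finrank_bot, hspan] at this
  omega

theorem le_sup_span_singleton_of_finrank_le {K V : Type*} [DivisionRing K] [AddCommGroup V]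
    [Module K V] {W U : Submodule K V} [FiniteDimensional K U] {x : V} (hWU : W ≤ U)
    (hxU : x ∈ U) (hxW : x ∉ W) (h : Module.finrank K U ≤ Module.finrank K W + 1) :
    U ≤ W ⊔ K ∙ x := by
  have : FiniteDimensional K W := Submodule.finiteDimensional_of_le hWU
  refine (Submodule.eq_of_le_of_finrank_le
    (sup_le hWU ((Submodule.span_singleton_le_iff_mem _ _).mpr hxU)) ?_).ge
  have := Submodule.finrank_sup_add_finrank_inf_eq W (K ∙ x)
  rw [(Submodule.disjoint_span_singleton_of_notMem hxW).eq_bot, finrank_bot,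
    finrank_span_singleton (by rintro rfl; exact hxW W.zero_mem)] at this
  omega

theorem mem_sup_span_singleton_of_linearIndependent {K V : Type*} [DivisionRing K]
    [AddCommGroup V] [Module K V] {r : ℕ} {N : Submodule K V} {L : Fin r → V}
    {Y : Fin (r + 1) → V} (hL : LinearIndependent K L) (hY : LinearIndependent K Y)
    (hLN : ∀ a, L a ∈ N) (hLY : ∀ a, L a ∈ Submodule.span K (Set.range Y)) (hY0 : Y 0 ∉ N)
    (a : Fin (r + 1)) : Y a ∈ N ⊔ K ∙ Y 0 := by
  have : FiniteDimensional K (Submodule.span K (Set.range Y)) :=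
    FiniteDimensional.span_of_finite K (Set.finite_range Y)
  have hLN' : Submodule.span K (Set.range L) ≤ N :=
    Submodule.span_le.mpr (Set.range_subset_iff.mpr hLN)
  refine sup_le_sup_right hLN' _ (le_sup_span_singleton_of_finrank_le
    (Submodule.span_le.mpr (Set.range_subset_iff.mpr hLY)) (Submodule.subset_span ⟨0, rfl⟩)
    (fun h => hY0 (hLN' h)) ?_ (Submodule.subset_span ⟨a, rfl⟩))
  rw [finrank_span_eq_card hY, finrank_span_eq_card hL, Fintype.card_fin, Fintype.card_fin]

theorem Submodule.finrank_map_add_finrank_inf_ker {K V W : Type*} [DivisionRing K]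
    [AddCommGroup V] [Module K V] [AddCommGroup W] [Module K W] (f : V →ₗ[K] W)
    (S : Submodule K V) [FiniteDimensional K S] :
    Module.finrank K (S.map f) + Module.finrank K ↥(S ⊓ LinearMap.ker f) = Module.finrank K S := by
  have hker : LinearMap.ker (f.domRestrict S) = (S ⊓ LinearMap.ker f).comap S.subtype := by
    rw [LinearMap.ker_domRestrict, Submodule.comap_inf, Submodule.comap_subtype_self, top_inf_eq]
  rw [← LinearMap.range_domRestrict, ← (Submodule.comapSubtypeEquivOfLe inf_le_left).finrank_eq,
    ← hker, LinearMap.finrank_range_add_finrank_ker]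

theorem Ideal.IsHomogeneous.pow {ι σ A : Type*} [CommSemiring A] [DecidableEq ι] [AddMonoid ι]
    [SetLike σ A] [AddSubmonoidClass σ A] {𝒢 : ι → σ} [GradedRing 𝒢] {I : Ideal A}
    (hI : I.IsHomogeneous 𝒢) : ∀ e : ℕ, (I ^ e).IsHomogeneous 𝒢
  | 0 => by rw [pow_zero, Ideal.one_eq_top]; exact Ideal.IsHomogeneous.top 𝒢
  | e + 1 => by rw [pow_succ]; exact (hI.pow e).mul hI

theorem weight_biWeight (e : Fin (n + 1) ⊕ Fin (m + 1) →₀ ℕ) :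
    Finsupp.weight (biWeight n m) e = (∑ a, e (Sum.inl a), ∑ b, e (Sum.inr b)) := by
  simp [Finsupp.weight_apply, Finsupp.sum_fintype, Fintype.sum_sum_type, biWeight,
    Prod.ext_iff, Prod.fst_sum, Prod.snd_sum]

theorem degree_eq_of_weight_biWeight_eq {e : Fin (n + 1) ⊕ Fin (m + 1) →₀ ℕ} {t : ℕ × ℕ}
    (h : Finsupp.weight (biWeight n m) e = t) : e.degree = t.1 + t.2 := by
  rw [← h, weight_biWeight, Finsupp.degree_eq_sum, Fintype.sum_sum_type]

instance (t : ℕ × ℕ) : FiniteDimensional k (𝒜 t) := by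
  rw [weightedHomogeneousSubmodule_eq_finsupp_supported]
  have : Finite {e | Finsupp.weight (biWeight n m) e = t} :=
    ((Finsupp.finite_of_degree_eq (σ := Fin (n + 1) ⊕ Fin (m + 1)) (t.1 + t.2)).subset
      fun _ => degree_eq_of_weight_biWeight_eq).to_subtype
  exact Module.Finite.of_basis (basisRestrictSupport k _)

theorem mem_span_X_of_mem_biHomogeneous {g : BiRing k n m} {e : ℕ × ℕ} (hg : g ∈ 𝒜 e)
    (he : e.1 + e.2 = 1) : g ∈ Submodule.span k (X '' {v | biWeight n m v = e}) := by
  refine IsWeightedHomogeneous.induction_on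
    (motive := fun g _ => g ∈ Submodule.span k (X '' {v | biWeight n m v = e}))
    (Submodule.zero_mem _) (fun _ _ _ _ => Submodule.add_mem _) (fun d r hd => ?_) hg
  obtain ⟨v, rfl⟩ : d ∈ Set.range (Finsupp.single · 1) := by
    rw [Finsupp.range_single_one]
    exact (degree_eq_of_weight_biWeight_eq hd).trans he
  rw [Finsupp.weight_single, one_smul] at hd
  rw [← mul_one r, ← smul_eq_mul, ← smul_monomial]
  exact Submodule.smul_mem _ _ (Submodule.subset_span ⟨v, hd, rfl⟩)

def biMonomial (e : ℕ × ℕ) : BiRing k n m := X (Sum.inl 0) ^ e.1 * X (Sum.inr 0) ^ e.2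

theorem biMonomial_mem (e : ℕ × ℕ) : (biMonomial e : BiRing k n m) ∈ 𝒜 e := by
  have := ((isWeightedHomogeneous_X k (biWeight n m) (Sum.inl 0)).pow e.1).mul
    ((isWeightedHomogeneous_X k (biWeight n m) (Sum.inr 0)).pow e.2)
  simpa [biWeight, biMonomial] using this

theorem prod_biMonomial_pow (e : Fin (n + 1) ⊕ Fin (m + 1) →₀ ℕ) :
    ∏ v, (biMonomial (biWeight n m v) : BiRing k n m) ^ e v =
      biMonomial (Finsupp.weight (biWeight n m) e) := by
  rw [weight_biWeight]
  simp [biMonomial, biWeight, Fintype.prod_sum_type, Finset.prod_pow_eq_pow_sum]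

theorem hilbertFn_add_finrank_inf (I : Ideal (BiRing k n m)) (t : ℕ × ℕ) :
    hilbertFn I t + Module.finrank k ↥(𝒜 t ⊓ I.restrictScalars k) = Module.finrank k (𝒜 t) := by
  have hker : LinearMap.ker (Ideal.Quotient.mkₐ k I).toLinearMap = I.restrictScalars k := by
    ext; simp [Ideal.Quotient.eq_zero_iff_mem]
  rw [hilbertFn, ← hker]
  exact Submodule.finrank_map_add_finrank_inf_ker _ _

namespace IsPointIdeal

variable {Q : Ideal (BiRing k n m)}

theorem isHomogeneous (hQ : IsPointIdeal Q) : Q.IsHomogeneous 𝒜 := by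
  obtain ⟨L, L', hL, hL', -, rfl⟩ := hQ
  refine Ideal.homogeneous_span _ _ ?_
  rintro _ (⟨a, rfl⟩ | ⟨b, rfl⟩)
  exacts [⟨_, hL a⟩, ⟨_, hL' b⟩]

-- The `n` independent forms of degree `(1,0)` generating `Q`, together with `x₀ ∉ Q`, span
-- the `(n+1)`-dimensional space of linear forms in the `xᵢ`; likewise for `y₀`.
theorem X_mem_sup_span_singleton (hQ : IsPointIdeal Q) (hx : X (Sum.inl 0) ∉ Q)
    (hy : X (Sum.inr 0) ∉ Q) (v : Fin (n + 1) ⊕ Fin (m + 1)) :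
    X v ∈ Q.restrictScalars k ⊔ k ∙ biMonomial (biWeight n m v) := by
  obtain ⟨L, L', hL, hL', hli, rfl⟩ := hQ
  have hX : LinearIndependent k (X : _ → BiRing k n m) := linearIndependent_X _ _
  cases v with
  | inl a =>
    have hLY : ∀ b, L b ∈ Submodule.span k (Set.range fun a => (X (Sum.inl a) : BiRing k n m)) :=
      fun b => Submodule.span_mono (by
        rintro _ ⟨_ | _, hv, rfl⟩
        · exact ⟨_, rfl⟩
        · simp [biWeight] at hv) (mem_span_X_of_mem_biHomogeneous (hL b) rfl)
    simpa [biMonomial, biWeight] using mem_sup_span_singleton_of_linearIndependent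
      (N := (Ideal.span (Set.range L ∪ Set.range L')).restrictScalars k)
      (by simpa using hli.comp Sum.inl Sum.inl_injective) (hX.comp Sum.inl Sum.inl_injective)
      (fun b => Ideal.subset_span (Or.inl ⟨b, rfl⟩)) hLY hx a
  | inr a =>
    have hLY : ∀ b, L' b ∈ Submodule.span k (Set.range fun a => (X (Sum.inr a) : BiRing k n m)) :=
      fun b => Submodule.span_mono (by
        rintro _ ⟨_ | _, hv, rfl⟩
        · simp [biWeight] at hv
        · exact ⟨_, rfl⟩) (mem_span_X_of_mem_biHomogeneous (hL' b) rfl)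
    simpa [biMonomial, biWeight] using mem_sup_span_singleton_of_linearIndependent
      (N := (Ideal.span (Set.range L ∪ Set.range L')).restrictScalars k)
      (by simpa using hli.comp Sum.inr Sum.inr_injective) (hX.comp Sum.inr Sum.inr_injective)
      (fun b => Ideal.subset_span (Or.inr ⟨b, rfl⟩)) hLY hy a

theorem biHomogeneous_le_sup_span_singleton (hQ : IsPointIdeal Q) (hx : X (Sum.inl 0) ∉ Q)
    (hy : X (Sum.inr 0) ∉ Q) (e : ℕ × ℕ) :
    𝒜 e ≤ Q.restrictScalars k ⊔ k ∙ biMonomial e := by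
  have hvar (v : Fin (n + 1) ⊕ Fin (m + 1)) : ∃ c : k, Ideal.Quotient.mk Q (X v) =
      Ideal.Quotient.mk Q (C c * biMonomial (biWeight n m v)) := by
    obtain ⟨q, hq, _, hc, hsum⟩ := Submodule.mem_sup.mp (hQ.X_mem_sup_span_singleton hx hy v)
    obtain ⟨c, rfl⟩ := Submodule.mem_span_singleton.mp hc
    refine ⟨c, Ideal.Quotient.eq.mpr ?_⟩
    rwa [← hsum, smul_eq_C_mul, add_sub_cancel_right]
  choose c hc using hvar
  intro g hg
  refine IsWeightedHomogeneous.induction_on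
    (motive := fun g _ => g ∈ Q.restrictScalars k ⊔ k ∙ biMonomial e)
    (Submodule.zero_mem _) (fun _ _ _ _ => Submodule.add_mem _) (fun d r hd => ?_) hg
  have hmk : Ideal.Quotient.mk Q (monomial d r) =
      Ideal.Quotient.mk Q (C (r * ∏ v, c v ^ d v) * biMonomial e) := by
    rw [monomial_eq, Finsupp.prod_fintype _ _ (fun _ => pow_zero _), map_mul, map_prod]
    simp_rw [map_pow, hc, ← map_pow, ← map_prod, ← map_mul, mul_pow, Finset.prod_mul_distrib,
      prod_biMonomial_pow, hd, map_mul, map_prod, map_pow, mul_assoc]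
  rw [← sub_add_cancel (monomial d r) ((r * ∏ v, c v ^ d v) • biMonomial e)]
  exact Submodule.add_mem_sup (Ideal.Quotient.eq.mp (by rwa [smul_eq_C_mul]))
    (Submodule.smul_mem _ _ (Submodule.mem_span_singleton_self _))

end IsPointIdeal

section FatIdeal

variable {s : ℕ} (P : Fin s → Ideal (BiRing k n m))

theorem fatIdeal_isHomogeneous (hP : ∀ j, IsPointIdeal (P j)) (mult : Fin s → ℕ) :
    (fatIdeal P mult).IsHomogeneous 𝒜 :=
  Ideal.IsHomogeneous.iInf fun j => (hP j).isHomogeneous.pow _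

theorem mul_fatIdeal_update_le {mult : Fin s → ℕ} {i : Fin s} (hi : 1 ≤ mult i) :
    P i * fatIdeal P (Function.update mult i (mult i - 1)) ≤ fatIdeal P mult := by
  refine le_iInf fun j => ?_
  rcases eq_or_ne j i with rfl | hj
  · calc P j * fatIdeal P (Function.update mult j (mult j - 1))
        ≤ P j * P j ^ (mult j - 1) :=
          Ideal.mul_mono_right ((iInf_le _ j).trans_eq (by rw [Function.update_self]))
      _ = P j ^ mult j := by rw [← pow_succ', Nat.sub_add_cancel hi]
  · refine Ideal.mul_le_right.trans (iInf_le_of_le j ?_)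
    rw [Function.update_of_ne hj]

end FatIdeal

section Separators

variable {IZ IZ' Q : Ideal (BiRing k n m)} {p : ℕ} {F : Fin p → BiRing k n m}
  {d : Fin p → ℕ × ℕ}

theorem mul_mem_inf_sup_span_singleton {e e' : ℕ × ℕ}
    (hQ : 𝒜 e ≤ Q.restrictScalars k ⊔ k ∙ biMonomial e) (hQZ : Q * IZ' ≤ IZ)
    {g f : BiRing k n m} (hg : g ∈ 𝒜 e) (hf : f ∈ 𝒜 e') (hfZ : f ∈ IZ') :
    g * f ∈ 𝒜 (e + e') ⊓ IZ.restrictScalars k ⊔ k ∙ (biMonomial e * f) := by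
  obtain ⟨q, hq, _, hc, rfl⟩ := Submodule.mem_sup.mp (hQ hg)
  obtain ⟨c, rfl⟩ := Submodule.mem_span_singleton.mp hc
  have hqe : q ∈ 𝒜 e := by
    simpa using Submodule.sub_mem _ hg (Submodule.smul_mem _ c (biMonomial_mem e))
  rw [add_mul, smul_mul_assoc]
  exact Submodule.add_mem_sup ⟨SetLike.mul_mem_graded hqe hf, hQZ (Ideal.mul_mem_mul hq hfZ)⟩
    (Submodule.smul_mem _ _ (Submodule.mem_span_singleton_self _))

theorem biHomogeneous_inf_le_sup_span (hIZ : IZ.IsHomogeneous 𝒜)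
    (hQ : ∀ e, 𝒜 e ≤ Q.restrictScalars k ⊔ k ∙ biMonomial e) (hQZ : Q * IZ' ≤ IZ)
    (hdeg : ∀ j, F j ∈ 𝒜 (d j)) (hgen : IZ ⊔ Ideal.span (Set.range F) = IZ') (t : ℕ × ℕ) :
    𝒜 t ⊓ IZ'.restrictScalars k ≤ 𝒜 t ⊓ IZ.restrictScalars k ⊔
      Submodule.span k ((fun j => biMonomial (t - d j) * F j) '' {j | d j ≤ t}) := by
  rintro h ⟨ht, hZ'⟩
  obtain ⟨a, ha, b, hb, rfl⟩ :=
    Submodule.mem_sup.mp (hgen ▸ hZ' : h ∈ IZ ⊔ Ideal.span (Set.range F))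
  obtain ⟨g, rfl⟩ := Ideal.mem_span_range_iff_exists_fun.mp hb
  rw [← DirectSum.decompose_of_mem_same 𝒜 ht, ← GradedAlgebra.proj_apply, map_add, map_sum]
  refine Submodule.add_mem _ (Submodule.mem_sup_left ⟨SetLike.coe_mem _, hIZ t ha⟩)
    (Submodule.sum_mem _ fun j _ => ?_)
  rw [GradedAlgebra.proj_apply]
  by_cases hj : d j ≤ t
  · rw [DirectSum.coe_decompose_mul_of_right_mem_of_le 𝒜 (hdeg j) hj]
    have hFZ : F j ∈ IZ' := hgen ▸ Ideal.mem_sup_right (Ideal.subset_span ⟨j, rfl⟩)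
    have := mul_mem_inf_sup_span_singleton (hQ _) hQZ
      (SetLike.coe_mem (DirectSum.decompose 𝒜 (g j) (t - d j))) (hdeg j) hFZ
    rw [tsub_add_cancel_of_le hj] at this
    have hspan : k ∙ (biMonomial (t - d j) * F j) ≤
        Submodule.span k ((fun j => biMonomial (t - d j) * F j) '' {j | d j ≤ t}) :=
      Submodule.span_mono (Set.singleton_subset_iff.mpr ⟨j, hj, rfl⟩)
    exact sup_le_sup_left hspan _ this
  · rw [DirectSum.coe_decompose_mul_of_right_mem_of_not_le 𝒜 (hdeg j) hj]
    exact Submodule.zero_mem _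

theorem hilbertFn_eq_add_card (hIZ : IZ.IsHomogeneous 𝒜)
    (hQ : ∀ e, 𝒜 e ≤ Q.restrictScalars k ⊔ k ∙ biMonomial e) (hQZ : Q * IZ' ≤ IZ)
    (hdeg : ∀ j, F j ∈ 𝒜 (d j)) (hgen : IZ ⊔ Ideal.span (Set.range F) = IZ')
    (hgood : IsGoodSepSet IZ F d) (t : ℕ × ℕ) :
    hilbertFn IZ t = hilbertFn IZ' t + (Finset.univ.filter fun j => d j ≤ t).card := by
  set T := Finset.univ.filter fun j => d j ≤ t
  have hT : (T : Set (Fin p)) = {j | d j ≤ t} := by simp [T]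
  have heq : 𝒜 t ⊓ IZ'.restrictScalars k = 𝒜 t ⊓ IZ.restrictScalars k ⊔
      Submodule.span k ((fun j => biMonomial (t - d j) * F j) '' T) := by
    refine le_antisymm (hT ▸ biHomogeneous_inf_le_sup_span hIZ hQ hQZ hdeg hgen t) (sup_le
      (inf_le_inf_left _ fun _ h => hgen ▸ Ideal.mem_sup_left h) (Submodule.span_le.mpr ?_))
    rintro _ ⟨j, hj, rfl⟩
    have hj : d j ≤ t := by simpa [T] using hj
    refine ⟨?_, Ideal.mul_mem_left _ _ (hgen ▸ Ideal.mem_sup_right (Ideal.subset_span ⟨j, rfl⟩))⟩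
    simpa [tsub_add_cancel_of_le hj] using
      SetLike.mul_mem_graded (biMonomial_mem (t - d j)) (hdeg j)
  have hcard := finrank_sup_span_image_eq_add (A := 𝒜 t ⊓ IZ.restrictScalars k)
    (G := fun j => biMonomial (t - d j) * F j) (s := T) fun c hc j hj => by
      simp only [T, Finset.mem_filter, Prod.le_def] at hj
      exact hgood t c (by simpa [T, Prod.le_def, biMonomial] using hc.2) j hj.2.1 hj.2.2
  have hZ := hilbertFn_add_finrank_inf IZ t
  have hZ' := hilbertFn_add_finrank_inf IZ' t
  rw [heq, hcard] at hZ'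
  omega

end Separators

theorem stmt8_general {s : ℕ}
    (P : Fin s → Ideal (BiRing k n m)) (mult : Fin s → ℕ)
    (hP : ∀ j, IsPointIdeal (P j))
    (hmult : ∀ j, 1 ≤ mult j) (i : Fin s)
    (IZ IZ' : Ideal (BiRing k n m))
    (hIZ : IZ = fatIdeal P mult)
    (hIZ' : IZ' = fatIdeal P (Function.update mult i (mult i - 1)))
    (hx : ∀ g : BiRing k n m, X (Sum.inl 0) * g ∈ IZ → g ∈ IZ)
    (hy : ∀ g : BiRing k n m, X (Sum.inr 0) * g ∈ IZ → g ∈ IZ)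
    {p : ℕ} (F : Fin p → BiRing k n m) (d : Fin p → ℕ × ℕ)
    (hdeg : ∀ j, BihomOfDeg (F j) (d j))
    (hmin : IsMinSepSet IZ IZ' F)
    (hgood : IsGoodSepSet IZ F d) :
    ∀ t : ℕ × ℕ,
      (hilbertFn IZ' t : ℤ) =
        (hilbertFn IZ t : ℤ) -
          ((Finset.univ.filter (fun j => (d j).1 ≤ t.1 ∧ (d j).2 ≤ t.2)).card : ℤ) := by
  intro t
  obtain ⟨hsep, hgen, -⟩ := hmin
  have hQZ : P i * IZ' ≤ IZ := hIZ ▸ hIZ' ▸ mul_fatIdeal_update_le P (hmult i)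
  rcases isEmpty_or_nonempty (Fin p) with hp | ⟨⟨j⟩⟩
  · obtain rfl : IZ = IZ' := by simpa [Set.range_eq_empty] using hgen
    simp
  have hnotMem (x : BiRing k n m) (hxZ : ∀ g, x * g ∈ IZ → g ∈ IZ) : x ∉ P i := fun hxP =>
    (hsep j).2.2 (hxZ _ (hQZ (Ideal.mul_mem_mul hxP (hsep j).2.1)))
  have := hilbertFn_eq_add_card (hIZ ▸ fatIdeal_isHomogeneous P hP mult)
    ((hP i).biHomogeneous_le_sup_span_singleton (hnotMem _ hx) (hnotMem _ hy)) hQZ hdeg hgen hgood t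
  simp only [Prod.le_def] at this
  omega

/-- Corollary 4.4: if `deg_Z(Pᵢ) = (d₁,…,d_p)` and there is a
good set of minimal separators `{F₁,…,F_p}` (with `deg Fⱼ = dⱼ`), then
`H_{Z'}(t) = H_Z(t) - #{j : dⱼ ⪯ t}` for all `t ∈ ℕ²`. -/
theorem stmt8 [IsAlgClosed k] [CharZero k] {s : ℕ}
    (P : Fin s → Ideal (BiRing k n m)) (mult : Fin s → ℕ)
    (hP : ∀ j, IsPointIdeal (P j)) (hinj : Function.Injective P)
    (hmult : ∀ j, 1 ≤ mult j) (i : Fin s)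
    (IZ IZ' : Ideal (BiRing k n m))
    (hIZ : IZ = fatIdeal P mult)
    (hIZ' : IZ' = fatIdeal P (Function.update mult i (mult i - 1)))
    (hx : ∀ g : BiRing k n m, X (Sum.inl 0) * g ∈ IZ → g ∈ IZ)
    (hy : ∀ g : BiRing k n m, X (Sum.inr 0) * g ∈ IZ → g ∈ IZ)
    (hx' : ∀ g : BiRing k n m, X (Sum.inl 0) * g ∈ IZ' → g ∈ IZ')
    (hy' : ∀ g : BiRing k n m, X (Sum.inr 0) * g ∈ IZ' → g ∈ IZ')
    {p : ℕ} (F : Fin p → BiRing k n m) (d : Fin p → ℕ × ℕ)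
    (hdeg : ∀ j, BihomOfDeg (F j) (d j))
    (hmin : IsMinSepSet IZ IZ' F)
    (hgood : IsGoodSepSet IZ F d) :
    ∀ t : ℕ × ℕ,
      (hilbertFn IZ' t : ℤ) =
        (hilbertFn IZ t : ℤ) -
          ((Finset.univ.filter (fun j => (d j).1 ≤ t.1 ∧ (d j).2 ≤ t.2)).card : ℤ) :=
  stmt8_general P mult hP hmult i IZ IZ' hIZ hIZ' hx hy F d hdeg hmin hgood
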